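/- Let (W,S) be a finite Coxeter system with longest element w₀, and I ⊆ S. If u ∈ W^I (a minimal right-coset representative) and v ∈ W_{w₀Iw₀} w₀ W_I, then u ≤_L v in the left weak order. -/

import Mathlib

/-- The Bruhat order on a Coxeter group. -/
def bruhatLE {B W : Type*} [Group W] {M : CoxeterMatrix B} (cs : CoxeterSystem M W)
    (u v : W) : Prop :=
  ∃ ω : List B, cs.IsReduced ω ∧ cs.wordProd ω = v ∧
    ∃ ω' : List B, ω'.Sublist ω ∧ cs.IsReduced ω' ∧ cs.wordProd ω' = u

/-- The standard parabolic subgroup generated by the simple reflections in `I`. -/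
def parabolic {B W : Type*} [Group W] {M : CoxeterMatrix B} (cs : CoxeterSystem M W)
    (I : Set B) : Subgroup W :=
  Subgroup.closure (cs.simple '' I)

/-- The double coset `W_I w W_J`. -/
def doubleCoset {B W : Type*} [Group W] {M : CoxeterMatrix B} (cs : CoxeterSystem M W)
    (I J : Set B) (w : W) : Set W :=
  {x : W | ∃ a ∈ parabolic cs I, ∃ b ∈ parabolic cs J, x = a * w * b}

/-!
Write `v = w₀ x` with `x ∈ W_I` (conjugation by the involution `w₀` carries `W_{w₀Iw₀}` onto
`W_I`) and take `c = w₀ x u⁻¹`. Two length identities then give `ℓ(v) = ℓ(c) + ℓ(u)`: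
`ℓ(w₀ z) + ℓ(z) = ℓ(w₀)` for every `z`, and `ℓ(u y) = ℓ(u) + ℓ(y)` for `u ∈ W^I`, `y ∈ W_I`.

Both come from the left inversion sets `N(w) = {t | ℓ(t w) < ℓ(w)}`. Since `|N(w)| = ℓ(w)` and
`N(w v) = N(w) ∆ w N(v) w⁻¹`, we have `ℓ(w v) + 2 |N(w) ∩ w N(v) w⁻¹| = ℓ(w) + ℓ(v)`. For `w = w₀`
the intersection is all of `w₀ N(z) w₀⁻¹`, as every reflection is an inversion of `w₀`; for `w`
of minimal length in its coset `w W_I` it is empty, as `N(y) ⊆ W_I` for `y ∈ W_I`.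

These facts about inversion sets amount to the strong exchange property. It comes from the
parity representation of `W` on `W × ZMod 2`, in which `s` acts by `(t, ε) ↦ (s t s, ε + [t = s])`:
it shows that the parity of the number of occurrences of `t` in the left inversion sequence of a
word depends only on the product of the word.
-/

open scoped symmDiff

theorem Set.ncard_symmDiff_add_two_mul_ncard_inter {α : Type*} {s t : Set α} (hs : s.Finite)
    (ht : t.Finite) : (s ∆ t).ncard + 2 * (s ∩ t).ncard = s.ncard + t.ncard := by
  have h₁ := Set.ncard_sdiff_add_ncard_of_subset
    ((Set.inter_subset_left (t := t)).trans Set.subset_union_left) (hs.union ht)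
  have h₂ := Set.ncard_union_add_ncard_inter s t hs ht
  rw [symmDiff_eq_sup_sdiff_inf]
  change ((s ∪ t) \ (s ∩ t)).ncard + _ = _
  omega

namespace CoxeterSystem

variable {B W : Type*} [Group W] {M : CoxeterMatrix B} (cs : CoxeterSystem M W)

local prefix:100 "s " => cs.simple
local prefix:100 "π " => cs.wordProd
local prefix:100 "ℓ " => cs.length
local prefix:100 "lis " => cs.leftInvSeq

theorem prod_map_alternatingWord_two_mul {G : Type*} [Monoid G] (f : B → G) (i i' : B)
    (m : ℕ) : ((alternatingWord i i' (2 * m)).map f).prod = (f i * f i') ^ m := by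
  induction m with
  | zero => simp [alternatingWord]
  | succ m ih =>
    rw [Nat.mul_succ, alternatingWord_succ, alternatingWord_succ, pow_succ, ← ih]
    simp

theorem getElem_leftInvSeq_alternatingWord_add (i i' : B) {k : ℕ} (hk : k < M i i') :
    (lis (alternatingWord i i' (2 * M i i')))[M i i' + k]'(by simp; omega) =
      (lis (alternatingWord i i' (2 * M i i')))[k]'(by simp; omega) := by
  rw [getElem_leftInvSeq_alternatingWord _ _ _ _ _ (by omega),
    getElem_leftInvSeq_alternatingWord _ _ _ _ _ (by omega), prod_alternatingWord_eq_mul_pow,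
    prod_alternatingWord_eq_mul_pow]
  simp [Nat.mul_add, pow_add, Nat.add_div, parity_simps]

open Classical in
theorem even_count_leftInvSeq_alternatingWord (i i' : B) (t : W) :
    Even ((lis (alternatingWord i i' (2 * M i i'))).count t) := by
  set L := lis (alternatingWord i i' (2 * M i i'))
  have hL : L.length = 2 * M i i' := by simp [L]
  have hdrop : L.drop (M i i') = L.take (M i i') := by
    refine List.ext_getElem (by simp [hL]; omega) fun k h₁ h₂ => ?_
    simp only [List.getElem_drop, List.getElem_take]
    exact getElem_leftInvSeq_alternatingWord_add cs i i' (by simp at h₂; omega)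
  rw [← List.take_append_drop (M i i') L, hdrop, List.count_append]
  exact ⟨_, rfl⟩

open Classical in
noncomputable def parityPerm (i : B) : Equiv.Perm (W × ZMod 2) :=
  (MulAut.conj (s i)).toEquiv.prodShear fun t => Equiv.addRight (if t = s i then 1 else 0)

open Classical in
theorem prod_map_parityPerm_apply (ω : List B) (t : W) (ε : ZMod 2) :
    (ω.map cs.parityPerm).prod (t, ε) =
      (MulAut.conj (π ω) t, ε + (lis ω).count (MulAut.conj (π ω) t)) := by
  induction ω generalizing t ε with
  | nil => simp
  | cons i ω ih =>
    have hcount : (lis (i :: ω)).count (MulAut.conj (s i) (MulAut.conj (π ω) t)) =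
        (lis ω).count (MulAut.conj (π ω) t) + if MulAut.conj (π ω) t = s i then 1 else 0 := by
      have hs : MulAut.conj (s i) (s i) = s i := by simp
      rw [leftInvSeq, List.count_cons,
        List.count_map_of_injective _ _ (MulAut.conj (s i)).injective]
      simp only [beq_iff_eq, eq_comm (a := s i), (MulAut.conj (s i)).injective.eq_iff' hs]
    rw [List.map_cons, List.prod_cons, Equiv.Perm.mul_apply, ih, wordProd_cons, map_mul,
      MulAut.mul_apply, hcount]
    simp only [parityPerm, Equiv.prodShear, MulEquiv.toEquiv_eq_coe, Equiv.coe_fn_mk,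
      MulEquiv.coe_toEquiv, Equiv.coe_addRight, Nat.cast_add, add_assoc]
    split_ifs <;> simp

theorem isLiftable_parityPerm : M.IsLiftable cs.parityPerm := by
  intro i i'
  ext ⟨t, ε⟩ : 1
  rw [← prod_map_alternatingWord_two_mul, prod_map_parityPerm_apply]
  have hπ : π (alternatingWord i i' (2 * M i i')) = 1 := by
    rw [wordProd, prod_map_alternatingWord_two_mul, simple_mul_simple_pow]
  obtain ⟨n, hn⟩ := even_count_leftInvSeq_alternatingWord cs i i' t
  have h2 : (2 : ZMod 2) = 0 := rfl
  simp [hπ, hn, ← two_mul, h2]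

noncomputable def parityRep : W →* Equiv.Perm (W × ZMod 2) :=
  cs.lift ⟨cs.parityPerm, cs.isLiftable_parityPerm⟩

theorem parityRep_wordProd (ω : List B) : cs.parityRep (π ω) = (ω.map cs.parityPerm).prod := by
  rw [wordProd, map_list_prod, List.map_map]
  congr 1
  exact List.map_congr_left fun i _ => cs.lift_apply_simple cs.isLiftable_parityPerm i

noncomputable def invParity (w t : W) : ZMod 2 := (cs.parityRep w (w⁻¹ * t * w, 0)).2

open Classical in
theorem invParity_wordProd (ω : List B) (t : W) :
    cs.invParity (π ω) t = (lis ω).count t := by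
  simp [invParity, parityRep_wordProd, prod_map_parityPerm_apply, mul_assoc]

theorem parityRep_apply (w t : W) (ε : ZMod 2) :
    cs.parityRep w (t, ε) = (w * t * w⁻¹, ε + cs.invParity w (w * t * w⁻¹)) := by
  obtain ⟨ω, rfl⟩ := cs.wordProd_surjective w
  simp [invParity, parityRep_wordProd, prod_map_parityPerm_apply, mul_assoc]

theorem invParity_mul (w v t : W) :
    cs.invParity (w * v) t = cs.invParity w t + cs.invParity v (w⁻¹ * t * w) := by
  set x := (w * v)⁻¹ * t * (w * v)
  have h : cs.parityRep (w * v) (x, 0) = cs.parityRep w (cs.parityRep v (x, 0)) := by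
    rw [map_mul, Equiv.Perm.mul_apply]
  rw [parityRep_apply, parityRep_apply, parityRep_apply,
    show v * x * v⁻¹ = w⁻¹ * t * w by simp only [x]; group,
    show w * (w⁻¹ * t * w) * w⁻¹ = t by group,
    show w * v * x * (w * v)⁻¹ = t by simp only [x]; group] at h
  simpa [add_comm] using congrArg Prod.snd h

theorem invParity_self {t : W} (ht : cs.IsReflection t) : cs.invParity t t = 1 := by
  obtain ⟨x, i, rfl⟩ := ht
  have hsi : cs.invParity (s i) (s i) = 1 := by
    simpa using cs.invParity_wordProd [i] (s i)
  have hx : cs.invParity x (x * s i * x⁻¹) + cs.invParity x⁻¹ (s i) = 0 := by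
    have h := cs.invParity_mul x x⁻¹ (x * s i * x⁻¹)
    rwa [mul_inv_cancel, show x⁻¹ * (x * s i * x⁻¹) * x = s i by group,
      show cs.invParity 1 (x * s i * x⁻¹) = 0 by simp [invParity], eq_comm] at h
  rw [invParity_mul, invParity_mul, show x⁻¹ * (x * s i * x⁻¹) * x = s i by group,
    show (x * s i)⁻¹ * (x * s i * x⁻¹) * (x * s i) = s i by group, hsi,
    add_right_comm, hx, zero_add]

theorem mem_leftInvSeq_of_invParity_eq_one {ω : List B} {t : W}
    (h : cs.invParity (π ω) t = 1) : t ∈ lis ω := by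
  classical
  rw [invParity_wordProd] at h
  refine List.count_pos_iff.mp (Nat.pos_of_ne_zero fun h0 => ?_)
  simp [h0] at h

theorem isLeftInversion_of_invParity_eq_one {w t : W} (h : cs.invParity w t = 1) :
    cs.IsLeftInversion w t := by
  obtain ⟨ω, hω, rfl⟩ := cs.exists_isReduced w
  exact cs.isLeftInversion_of_mem_leftInvSeq hω (cs.mem_leftInvSeq_of_invParity_eq_one h)

theorem invParity_eq_one_iff {w t : W} (ht : cs.IsReflection t) :
    cs.invParity w t = 1 ↔ cs.IsLeftInversion w t := by
  refine ⟨cs.isLeftInversion_of_invParity_eq_one, fun hwt => ?_⟩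
  by_contra hne
  have h0 : cs.invParity w t = 0 := by
    revert hne; generalize cs.invParity w t = a; revert a; decide
  have h1 : cs.invParity (t * w) t = 1 := by
    rw [invParity_mul, invParity_self cs ht, show t⁻¹ * t * t = t by simp, h0, add_zero]
  have := (cs.isLeftInversion_of_invParity_eq_one h1).2
  rw [← mul_assoc, ht.mul_self, one_mul] at this
  exact absurd hwt.2 (not_lt.mpr this.le)

theorem mem_leftInvSeq_iff {ω : List B} (hω : cs.IsReduced ω) {t : W} :
    t ∈ lis ω ↔ cs.IsLeftInversion (π ω) t :=
  ⟨cs.isLeftInversion_of_mem_leftInvSeq hω, fun ht =>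
    cs.mem_leftInvSeq_of_invParity_eq_one ((cs.invParity_eq_one_iff ht.1).mpr ht)⟩

def leftInvSet (w : W) : Set W := {t | cs.IsLeftInversion w t}

theorem leftInvSet_wordProd {ω : List B} (hω : cs.IsReduced ω) :
    cs.leftInvSet (π ω) = {t | t ∈ lis ω} := by
  ext t
  exact (cs.mem_leftInvSeq_iff hω).symm

theorem ncard_leftInvSet (w : W) : (cs.leftInvSet w).ncard = ℓ w := by
  classical
  obtain ⟨ω, hω, rfl⟩ := cs.exists_isReduced w
  rw [leftInvSet_wordProd cs hω, ← List.coe_toFinset, Set.ncard_coe_finset,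
    List.toFinset_card_of_nodup hω.nodup_leftInvSeq, length_leftInvSeq, hω.eq]

theorem finite_leftInvSet (w : W) : (cs.leftInvSet w).Finite := by
  obtain ⟨ω, hω, rfl⟩ := cs.exists_isReduced w
  rw [leftInvSet_wordProd cs hω]
  exact (lis ω).finite_toSet

theorem leftInvSet_mul (w v : W) :
    cs.leftInvSet (w * v) = cs.leftInvSet w ∆ ((fun t => w⁻¹ * t * w) ⁻¹' cs.leftInvSet v) := by
  ext t
  by_cases ht : cs.IsReflection t
  · have ht' : cs.IsReflection (w⁻¹ * t * w) := by simpa using ht.conj w⁻¹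
    simp only [Set.mem_symmDiff, leftInvSet, Set.mem_ofPred_eq, Set.mem_preimage,
      ← invParity_eq_one_iff cs ht, ← invParity_eq_one_iff cs ht', invParity_mul]
    generalize cs.invParity w t = a
    generalize cs.invParity v (w⁻¹ * t * w) = b
    revert a b; decide
  · have ht' : ¬ cs.IsReflection (w⁻¹ * t * w) := by
      simpa using mt (cs.isReflection_conj_iff w⁻¹ t).mp ht
    simp [Set.mem_symmDiff, leftInvSet, IsLeftInversion, ht, ht']

theorem ncard_preimage_conj_leftInvSet (w v : W) :
    ((fun t => w⁻¹ * t * w) ⁻¹' cs.leftInvSet v).ncard = ℓ v := by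
  rw [Set.ncard_preimage_of_injective_subset_range (fun a b h => by simpa using h)
    (fun t _ => ⟨w * t * w⁻¹, by group⟩), ncard_leftInvSet]

theorem length_mul_add_two_mul_ncard (w v : W) :
    ℓ (w * v) + 2 * (cs.leftInvSet w ∩ (fun t => w⁻¹ * t * w) ⁻¹' cs.leftInvSet v).ncard =
      ℓ w + ℓ v := by
  have hfin : ((fun t => w⁻¹ * t * w) ⁻¹' cs.leftInvSet v).Finite :=
    (cs.finite_leftInvSet v).preimage fun a _ b _ h => by simpa using h
  rw [← ncard_leftInvSet, leftInvSet_mul,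
    Set.ncard_symmDiff_add_two_mul_ncard_inter (cs.finite_leftInvSet w) hfin, ncard_leftInvSet,
    ncard_preimage_conj_leftInvSet]

theorem isLeftInversion_of_forall_length_lt {w₀ t : W} (hw₀ : ∀ w, w ≠ w₀ → ℓ w < ℓ w₀)
    (ht : cs.IsReflection t) : cs.IsLeftInversion w₀ t :=
  ⟨ht, hw₀ _ fun h => ht.length_mul_right_ne w₀ (by rw [h])⟩

theorem inv_eq_self_of_forall_length_lt {w₀ : W} (hw₀ : ∀ w, w ≠ w₀ → ℓ w < ℓ w₀) :
    w₀⁻¹ = w₀ := by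
  by_contra h
  exact lt_irrefl _ (length_inv cs w₀ ▸ hw₀ _ h)

theorem length_mul_add_length_of_forall_length_lt {w₀ : W}
    (hw₀ : ∀ w, w ≠ w₀ → ℓ w < ℓ w₀) (z : W) : ℓ (w₀ * z) + ℓ z = ℓ w₀ := by
  have hsub : (fun t => w₀⁻¹ * t * w₀) ⁻¹' cs.leftInvSet z ⊆ cs.leftInvSet w₀ :=
    fun t ht => cs.isLeftInversion_of_forall_length_lt hw₀
      ((cs.isReflection_conj_iff w₀⁻¹ t).mp (by simpa using ht.1))
  have h := cs.length_mul_add_two_mul_ncard w₀ z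
  rwa [Set.inter_eq_right.mpr hsub, ncard_preimage_conj_leftInvSet, two_mul, ← add_assoc,
    Nat.add_right_cancel_iff] at h

theorem exists_isReduced_sublist (ω : List B) :
    ∃ ω' : List B, ω'.Sublist ω ∧ cs.IsReduced ω' ∧ π ω' = π ω := by
  induction ω with
  | nil => exact ⟨[], .slnil, by simp [IsReduced], rfl⟩
  | cons i ω ih =>
    obtain ⟨ρ, hsub, hρ, hπ⟩ := ih
    rw [wordProd_cons, ← hπ]
    rcases cs.length_simple_mul (π ρ) i with hup | hdown
    · refine ⟨i :: ρ, hsub.cons_cons i, ?_, wordProd_cons ..⟩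
      rw [IsReduced, wordProd_cons, hup, hρ.eq, List.length_cons]
    · obtain ⟨j, hj, hget⟩ := List.getElem_of_mem
        ((cs.mem_leftInvSeq_iff hρ).mpr ⟨cs.isReflection_simple i, by omega⟩)
      have hj' : j < ρ.length := by simpa using hj
      have herase : s i * π ρ = π (ρ.eraseIdx j) := by
        rw [← getD_leftInvSeq_mul_wordProd, List.getD_eq_getElem _ _ hj, hget]
      refine ⟨ρ.eraseIdx j, (List.eraseIdx_sublist ρ j).trans (hsub.cons i), ?_, herase.symm⟩
      rw [IsReduced, ← herase, List.length_eraseIdx_of_lt hj', ← hρ.eq]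
      omega

variable (I : Set B)

theorem simple_mem_parabolic {i : B} (hi : i ∈ I) : s i ∈ parabolic cs I :=
  Subgroup.subset_closure ⟨i, hi, rfl⟩

theorem exists_word_of_mem_parabolic {x : W} (hx : x ∈ parabolic cs I) :
    ∃ ω : List B, (∀ i ∈ ω, i ∈ I) ∧ π ω = x := by
  refine Subgroup.closure_induction ?_ ⟨[], by simp, by simp⟩ ?_ ?_ hx
  · rintro _ ⟨i, hi, rfl⟩
    exact ⟨[i], by simpa using hi, by simp⟩
  · rintro _ _ _ _ ⟨ω, hω, rfl⟩ ⟨ω', hω', rfl⟩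
    exact ⟨ω ++ ω', by simpa using fun i hi => (hi.elim (hω i) (hω' i)), wordProd_append ..⟩
  · rintro _ _ ⟨ω, hω, rfl⟩
    exact ⟨ω.reverse, by simpa using hω, wordProd_reverse ..⟩

theorem exists_isReduced_word_of_mem_parabolic {x : W} (hx : x ∈ parabolic cs I) :
    ∃ ω : List B, (∀ i ∈ ω, i ∈ I) ∧ cs.IsReduced ω ∧ π ω = x := by
  obtain ⟨ω, hω, rfl⟩ := cs.exists_word_of_mem_parabolic I hx
  obtain ⟨ω', hsub, hred, hπ⟩ := cs.exists_isReduced_sublist ω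
  exact ⟨ω', fun i hi => hω i (hsub.subset hi), hred, hπ⟩

theorem exists_isRightDescent_of_mem_parabolic {x : W} (hx : x ∈ parabolic cs I) (hx₁ : x ≠ 1) :
    ∃ j ∈ I, cs.IsRightDescent x j := by
  obtain ⟨ω, hωI, hω, rfl⟩ := cs.exists_isReduced_word_of_mem_parabolic I hx
  obtain ⟨ρ, j, rfl⟩ := (List.eq_nil_or_concat' ω).resolve_left (by rintro rfl; simp at hx₁)
  refine ⟨j, hωI j (by simp), ?_⟩
  rw [IsRightDescent, hω.eq, wordProd_append, wordProd_singleton, mul_assoc,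
    simple_mul_simple_self, mul_one, List.length_append, List.length_singleton]
  exact Nat.lt_succ_of_le (cs.length_wordProd_le ρ)

theorem mem_parabolic_of_mem_leftInvSeq {ω : List B} (hω : ∀ i ∈ ω, i ∈ I) {t : W}
    (ht : t ∈ lis ω) : t ∈ parabolic cs I := by
  induction ω generalizing t with
  | nil => simp at ht
  | cons i ω ih =>
    have hi := cs.simple_mem_parabolic I (hω i (by simp))
    rw [leftInvSeq, List.mem_cons, List.mem_map] at ht
    obtain rfl | ⟨t', ht', rfl⟩ := ht
    · exact hi
    · exact mul_mem (mul_mem hi (ih (fun j hj => hω j (by simp [hj])) ht')) (inv_mem hi)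

theorem mem_parabolic_of_isLeftInversion {x t : W} (hx : x ∈ parabolic cs I)
    (ht : cs.IsLeftInversion x t) : t ∈ parabolic cs I := by
  obtain ⟨ω, hωI, hω, rfl⟩ := cs.exists_isReduced_word_of_mem_parabolic I hx
  exact cs.mem_parabolic_of_mem_leftInvSeq I hωI ((cs.mem_leftInvSeq_iff hω).mpr ht)

theorem length_mul_eq_add_of_minimal {u₀ x : W}
    (hmin : ∀ y ∈ parabolic cs I, ℓ u₀ ≤ ℓ (u₀ * y)) (hx : x ∈ parabolic cs I) :
    ℓ (u₀ * x) = ℓ u₀ + ℓ x := by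
  have hdisj : cs.leftInvSet u₀ ∩ (fun t => u₀⁻¹ * t * u₀) ⁻¹' cs.leftInvSet x = ∅ := by
    refine Set.eq_empty_iff_forall_notMem.mpr fun t ⟨htu, htx⟩ => ?_
    have h := hmin _ (cs.mem_parabolic_of_isLeftInversion I hx htx)
    rw [show u₀ * (u₀⁻¹ * t * u₀) = t * u₀ by group] at h
    exact absurd htu.2 (not_lt.mpr h)
  simpa [hdisj] using cs.length_mul_add_two_mul_ncard u₀ x

theorem length_mul_eq_add_of_forall_length_lt {u x : W}
    (hu : ∀ j ∈ I, ℓ u < ℓ (u * s j)) (hx : x ∈ parabolic cs I) :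
    ℓ (u * x) = ℓ u + ℓ x := by
  obtain ⟨x₀, hx₀, hmin⟩ := (measure fun y => ℓ (u * y)).wf.has_min
    (parabolic cs I : Set W) ⟨1, one_mem _⟩
  have hmin' : ∀ y ∈ parabolic cs I, ℓ (u * x₀) ≤ ℓ (u * x₀ * y) := fun y hy => by
    simpa [mul_assoc] using not_lt.mp (hmin _ (mul_mem hx₀ hy))
  suffices hx₀ : x₀⁻¹ = 1 by
    simpa [inv_eq_one.mp hx₀] using cs.length_mul_eq_add_of_minimal I hmin' hx
  -- `u = (u x₀) x₀⁻¹` with `u x₀` minimal, so a descent `s j` of `x₀⁻¹` with `j ∈ I` would be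
  -- a descent of `u`
  by_contra hne
  obtain ⟨j, hj, hdesc⟩ := cs.exists_isRightDescent_of_mem_parabolic I (inv_mem hx₀) hne
  have h₁ := cs.length_mul_eq_add_of_minimal I hmin' (inv_mem hx₀)
  have h₂ := cs.length_mul_eq_add_of_minimal I hmin'
    (mul_mem (inv_mem hx₀) (cs.simple_mem_parabolic I hj))
  have h₃ := hu j hj
  rw [show u = u * x₀ * x₀⁻¹ by group, mul_assoc (u * x₀)] at h₃
  rw [IsRightDescent] at hdesc
  omega

end CoxeterSystem

/-- For a finite Coxeter group with longest element `w₀`: if `u ∈ W^I` and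
`v ∈ W_{w₀Iw₀} w₀ W_I` then `u ≤_L v` in the left weak order. -/
theorem stmt11 {B W : Type*} [Group W] {M : CoxeterMatrix B} (cs : CoxeterSystem M W)
    (w₀ : W) (hw₀ : ∀ w : W, w ≠ w₀ → cs.length w < cs.length w₀)
    (I : Set B) (u v : W)
    (hu : ∀ s ∈ I, cs.length u < cs.length (u * cs.simple s))
    (hv : ∃ a ∈ Subgroup.closure ((fun g => w₀ * g * w₀) '' (cs.simple '' I)),
      ∃ b ∈ parabolic cs I, v = a * w₀ * b) :
    ∃ c : W, v = c * u ∧ cs.length v = cs.length c + cs.length u := by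
  obtain ⟨a, ha, b, hb, rfl⟩ := hv
  have hw₀inv := cs.inv_eq_self_of_forall_length_lt hw₀
  rw [show (fun g => w₀ * g * w₀) = (MulAut.conj w₀).toMonoidHom by ext g; simp [hw₀inv],
    ← MonoidHom.map_closure] at ha
  obtain ⟨a, ha, rfl⟩ := ha
  have hx : a * b ∈ parabolic cs I := mul_mem ha hb
  refine ⟨w₀ * (a * b * u⁻¹), by simp [mul_assoc], ?_⟩
  rw [show (MulAut.conj w₀).toMonoidHom a * w₀ * b = w₀ * (a * b) by simp [mul_assoc]]
  have h₁ := cs.length_mul_add_length_of_forall_length_lt hw₀ (a * b)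
  have h₂ := cs.length_mul_add_length_of_forall_length_lt hw₀ (a * b * u⁻¹)
  have h₃ : cs.length (a * b * u⁻¹) = cs.length u + cs.length (a * b) := by
    rw [← cs.length_inv, mul_inv_rev, inv_inv,
      cs.length_mul_eq_add_of_forall_length_lt I hu (inv_mem hx), cs.length_inv]
  omega
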